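/- For A : Type and B : A → Type, the map SigmaIsolate is an equivalence if and only if for all a : A and b : B(a), isolatedness of the pair (a,b) in Σ A B implies that both a and b are isolated; moreover SigmaIsolate is an equivalence iff it is surjective. -/

import Mathlib

def IsIsolated {A : Type u} (a : A) : Type u := ∀ b : A, Decidable (a = b)

def Isolated (A : Type u) : Type u := Σ a : A, IsIsolated a

/-- A pair of isolated points is isolated in the `Σ`-type. -/
def pairIsolated {A : Type u} {B : A → Type v} {a₀ : A} {b₀ : B a₀}
    (ha : IsIsolated a₀) (hb : IsIsolated b₀) :
    IsIsolated (⟨a₀, b₀⟩ : Σ a : A, B a) := by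
  rintro ⟨a, b⟩
  rcases ha a with hp | p
  · exact isFalse fun h => hp (congrArg Sigma.fst h)
  · subst p
    rcases hb b with hq | q
    · exact isFalse fun h => hq (eq_of_heq (Sigma.mk.inj_iff.mp h).2)
    · subst q; exact isTrue rfl

/-- The canonical map sending a pair of isolated points to the isolated pair. -/
def SigmaIsolate {A : Type u} {B : A → Type v} :
    (Σ a : Isolated A, Isolated (B a.1)) → Isolated (Σ a : A, B a) :=
  fun x => ⟨⟨x.1.1, x.2.1⟩, pairIsolated x.1.2 x.2.2⟩

/-!
Being isolated is a property, not structure: `Decidable` has at most one inhabitant. Hence an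
isolated point is determined by its underlying point, so `SigmaIsolate` is injective, and an isolated
pair lies in its image exactly when both components are isolated.
-/

instance IsIsolated.instSubsingleton {A : Type u} (a : A) : Subsingleton (IsIsolated a) :=
  inferInstanceAs (Subsingleton (∀ b : A, Decidable (a = b)))

theorem Isolated.fst_injective {A : Type u} : Function.Injective (Sigma.fst : Isolated A → A) := by
  rintro ⟨a, ha⟩ ⟨a', ha'⟩ (rfl : a = a')
  rw [Subsingleton.elim ha ha']

section SigmaIsolate

variable {A : Type u} {B : A → Type v}

theorem sigmaIsolate_injective : Function.Injective (SigmaIsolate (A := A) (B := B)) := by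
  rintro ⟨⟨a, ha⟩, ⟨b, hb⟩⟩ ⟨⟨a', ha'⟩, ⟨b', hb'⟩⟩ h
  obtain ⟨rfl, hbb'⟩ := Sigma.mk.inj_iff.mp (congrArg Sigma.fst h :
    (⟨a, b⟩ : Σ a : A, B a) = ⟨a', b'⟩)
  obtain rfl := eq_of_heq hbb'
  rw [Subsingleton.elim ha ha', Subsingleton.elim hb hb']

theorem exists_sigmaIsolate_eq_iff (p : Isolated (Σ a : A, B a)) :
    (∃ x, SigmaIsolate x = p) ↔ Nonempty (IsIsolated p.1.1) ∧ Nonempty (IsIsolated p.1.2) := by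
  obtain ⟨⟨a, b⟩, hp⟩ := p
  constructor
  · rintro ⟨⟨⟨a', ha⟩, ⟨b', hb⟩⟩, h⟩
    obtain ⟨rfl, hbb'⟩ := Sigma.mk.inj_iff.mp (congrArg Sigma.fst h :
      (⟨a', b'⟩ : Σ a : A, B a) = ⟨a, b⟩)
    obtain rfl := eq_of_heq hbb'
    exact ⟨⟨ha⟩, ⟨hb⟩⟩
  · rintro ⟨⟨ha⟩, ⟨hb⟩⟩
    exact ⟨⟨⟨a, ha⟩, ⟨b, hb⟩⟩, Isolated.fst_injective rfl⟩

theorem sigmaIsolate_surjective_iff :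
    Function.Surjective (SigmaIsolate (A := A) (B := B)) ↔
      ∀ (a : A) (b : B a), Nonempty (IsIsolated (⟨a, b⟩ : Σ a : A, B a)) →
        Nonempty (IsIsolated a) ∧ Nonempty (IsIsolated b) := by
  refine ⟨fun hs a b ⟨hab⟩ => (exists_sigmaIsolate_eq_iff ⟨⟨a, b⟩, hab⟩).mp (hs _), ?_⟩
  rintro hc ⟨⟨a, b⟩, hab⟩
  exact (exists_sigmaIsolate_eq_iff _).mpr (hc a b ⟨hab⟩)

theorem sigmaIsolate_bijective_iff_surjective :
    Function.Bijective (SigmaIsolate (A := A) (B := B)) ↔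
      Function.Surjective (SigmaIsolate (A := A) (B := B)) :=
  and_iff_right sigmaIsolate_injective

end SigmaIsolate

/-- `SigmaIsolate` is an equivalence iff isolatedness of a pair implies
isolatedness of both components, and iff it is surjective. -/
theorem sigmaIsolate_equiv_iff {A : Type u} {B : A → Type v} :
    (Function.Bijective (SigmaIsolate (A := A) (B := B)) ↔
      ∀ (a : A) (b : B a), Nonempty (IsIsolated (⟨a, b⟩ : Σ a : A, B a)) →
        Nonempty (IsIsolated a) ∧ Nonempty (IsIsolated b)) ∧
    (Function.Bijective (SigmaIsolate (A := A) (B := B)) ↔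
      Function.Surjective (SigmaIsolate (A := A) (B := B))) := by
  exact ⟨sigmaIsolate_bijective_iff_surjective.trans sigmaIsolate_surjective_iff,
    sigmaIsolate_bijective_iff_surjective⟩
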